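/- arXiv:1507.01356 — 7 statements merged into one kernel-verified Lean document; each statement's English description precedes it below -/
import Mathlib

section
/- Let σ > 0, let θ ∈ (0,π), let y ≥ 0, and set √q := e^{σπ/2} + e^{−σπ/2} (i.e. cosh(σπ/2) = √q/2) and Λ_θ(y) = e^{−σ(π−θ)}·(y + e^{σπ/2})/(y + e^{−σπ/2}). Then e^{σθ} + e^{−σ(π−θ)}·(1 + y·√q) = Λ_θ(y)·(1 + y·√q + e^{−σπ}). -/
/-! With `a = e^{σπ/2}` and `√q = a + a⁻¹`, both sides factor through `√q`:
`a² + (1 + y√q) = √q (y + a)` and `1 + y√q + a⁻² = √q (y + a⁻¹)`, while `e^{σθ} = e^{-σ(π-θ)} a²`.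
The identity is then the cancellation of `√q (y + a⁻¹)`. -/

open Real

section FaceWeights

variable {K : Type*} [Field K]

theorem sq_add_one_add_mul_add_inv {a : K} (ha : a ≠ 0) (y : K) :
    a ^ 2 + (1 + y * (a + a⁻¹)) = (a + a⁻¹) * (y + a) := by
  field_simp
  ring

theorem one_add_mul_add_inv_add_inv_sq {a : K} (ha : a ≠ 0) (y : K) :
    1 + y * (a + a⁻¹) + (a ^ 2)⁻¹ = (a + a⁻¹) * (y + a⁻¹) := by
  field_simp
  ring

theorem mul_sq_add_mul_eq_mul_div_mul {a : K} (ha : a ≠ 0) (c : K) {y : K} (hy : y + a⁻¹ ≠ 0) :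
    c * a ^ 2 + c * (1 + y * (a + a⁻¹))
      = c * ((y + a) / (y + a⁻¹)) * (1 + y * (a + a⁻¹) + (a ^ 2)⁻¹) := by
  rw [← mul_add, sq_add_one_add_mul_add_inv ha, one_add_mul_add_inv_add_inv_sq ha,
    mul_comm (a + a⁻¹) (y + a⁻¹), ← mul_assoc (c * _), mul_assoc c, div_mul_cancel₀ _ hy]
  ring

end FaceWeights

theorem face_relation_identity_general
    (σ θ y : ℝ) (hy : 0 ≤ y)
    (sqrtq : ℝ) (hq : sqrtq = Real.exp (σ * π / 2) + Real.exp (-σ * π / 2))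
    (Λ : ℝ → ℝ)
    (hΛ : ∀ z : ℝ, Λ z = Real.exp (-σ * (π - θ)) *
      ((z + Real.exp (σ * π / 2)) / (z + Real.exp (-σ * π / 2)))) :
    Real.exp (σ * θ) + Real.exp (-σ * (π - θ)) * (1 + y * sqrtq)
      = Λ y * (1 + y * sqrtq + Real.exp (-σ * π)) := by
  set a := Real.exp (σ * π / 2)
  have h_half : Real.exp (-σ * π / 2) = a⁻¹ := by
    rw [← Real.exp_neg]; ring_nf
  have h_full : Real.exp (-σ * π) = (a ^ 2)⁻¹ := by
    rw [← Real.exp_nat_mul, ← Real.exp_neg]; ring_nf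
  have h_angle : Real.exp (σ * θ) = Real.exp (-σ * (π - θ)) * a ^ 2 := by
    rw [← Real.exp_nat_mul, ← Real.exp_add]; ring_nf
  have hden : y + a⁻¹ ≠ 0 := by positivity
  rw [hΛ, hq, h_half, h_full, h_angle]
  exact mul_sq_add_mul_eq_mul_div_mul (Real.exp_pos _).ne' _ hden

theorem face_relation_identity
    (σ θ y : ℝ) (hσ : 0 < σ) (hθ : θ ∈ Set.Ioo 0 π) (hy : 0 ≤ y)
    (sqrtq : ℝ) (hq : sqrtq = Real.exp (σ * π / 2) + Real.exp (-σ * π / 2))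
    (Λ : ℝ → ℝ)
    (hΛ : ∀ z : ℝ, Λ z = Real.exp (-σ * (π - θ)) *
      ((z + Real.exp (σ * π / 2)) / (z + Real.exp (-σ * π / 2)))) :
    Real.exp (σ * θ) + Real.exp (-σ * (π - θ)) * (1 + y * sqrtq)
      = Λ y * (1 + y * sqrtq + Real.exp (-σ * π)) :=
  face_relation_identity_general σ θ y hy sqrtq hq Λ hΛ
end

section
/- Let σ > 0, let θ ∈ (0,π), let x > 0 satisfy Λ_θ(x) = 1, where Λ_θ(y) = e^{−σ(π−θ)}·(y + e^{σπ/2})/(y + e^{−σπ/2}), and let β ∈ (0,1]. Then Λ_θ(βx) − 1 = 2(1−β)·x·sinh(σπ/2) / ((x + e^{σπ/2})·(βx + e^{−σπ/2})). In particular, Λ_θ(βx) > 1 for every β ∈ (0,1), and Λ_θ(x) = 1 at β = 1. -/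
/-!
With `A = exp (σπ/2)` and `B = exp (-σπ/2)`, `Λ` is a Möbius map `c (y + A)/(y + B)`, and the
criticality condition `Λ x = 1` forces `c = (x + B)/(x + A)`. Then
`Λ y - 1 = (A - B)(x - y)/((x + A)(y + B))`, and `A - B = 2 sinh (σπ/2) > 0`.
-/

open Real

theorem mobius_ratio_mul_sub_one {A B x y : ℝ} (hxA : x + A ≠ 0) (hyB : y + B ≠ 0) :
    (x + B) / (x + A) * ((y + A) / (y + B)) - 1 = (A - B) * (x - y) / ((x + A) * (y + B)) := by
  field_simp
  ring

theorem Real.exp_sub_exp_neg_eq_two_mul_sinh (a : ℝ) : exp a - exp (-a) = 2 * sinh a := by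
  rw [sinh_eq]
  ring

theorem subcritical_coefficient_formula_general
    (σ θ x β : ℝ) (hσ : 0 < σ) (hx : 0 < x)
    (Λ : ℝ → ℝ)
    (hΛ : ∀ y : ℝ, Λ y = Real.exp (-σ * (π - θ)) *
      ((y + Real.exp (σ * π / 2)) / (y + Real.exp (-σ * π / 2))))
    (hcrit : Λ x = 1)
    (hβ : β ∈ Set.Ioc (0 : ℝ) 1) :
    Λ (β * x) - 1 = 2 * (1 - β) * x * Real.sinh (σ * π / 2) /
      ((x + Real.exp (σ * π / 2)) * (β * x + Real.exp (-σ * π / 2)))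
    ∧ (β < 1 → 1 < Λ (β * x))
    ∧ (β = 1 → Λ (β * x) = 1) := by
  obtain ⟨hβ0, -⟩ := hβ
  have hprefactor : exp (-σ * (π - θ)) =
      (x + exp (-σ * π / 2)) / (x + exp (σ * π / 2)) := by
    rw [hΛ] at hcrit
    rw [eq_one_div_of_mul_eq_one_left hcrit, one_div_div]
  have hformula : Λ (β * x) - 1 = 2 * (1 - β) * x * sinh (σ * π / 2) /
      ((x + exp (σ * π / 2)) * (β * x + exp (-σ * π / 2))) := by
    rw [hΛ, hprefactor, mobius_ratio_mul_sub_one (by positivity) (by positivity),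
      neg_mul, neg_div, exp_sub_exp_neg_eq_two_mul_sinh]
    ring
  refine ⟨hformula, fun hβ1 => ?_, fun hβ1 => by rw [hβ1, one_mul, hcrit]⟩
  have hsinh : 0 < sinh (σ * π / 2) := sinh_pos_iff.mpr (by positivity)
  have h1β : 0 < 1 - β := sub_pos.mpr hβ1
  rw [← sub_pos, hformula]
  positivity

theorem subcritical_coefficient_formula
    (σ θ x β : ℝ) (hσ : 0 < σ) (hθ : θ ∈ Set.Ioo 0 π) (hx : 0 < x)
    (Λ : ℝ → ℝ)
    (hΛ : ∀ y : ℝ, Λ y = Real.exp (-σ * (π - θ)) *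
      ((y + Real.exp (σ * π / 2)) / (y + Real.exp (-σ * π / 2))))
    (hcrit : Λ x = 1)
    (hβ : β ∈ Set.Ioc (0 : ℝ) 1) :
    Λ (β * x) - 1 = 2 * (1 - β) * x * Real.sinh (σ * π / 2) /
      ((x + Real.exp (σ * π / 2)) * (β * x + Real.exp (-σ * π / 2)))
    ∧ (β < 1 → 1 < Λ (β * x))
    ∧ (β = 1 → Λ (β * x) = 1) :=
  subcritical_coefficient_formula_general σ θ x β hσ hx Λ hΛ hcrit hβ
end

section
/- Let σ > 0, β ∈ (0,1), and θ₀ ∈ (0, π/2]. Then there exists a constant c > 0, depending only on σ, β and θ₀, such that for every θ ∈ [θ₀, π−θ₀], Λ_θ(β·x_θ) − 1 ≥ c, where x_θ = sinh(σθ/2)/sinh(σ(π−θ)/2) and Λ_θ(y) = e^{−σ(π−θ)}·(y + e^{σπ/2})/(y + e^{−σπ/2}). -/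
/-!
With `a = σθ/2` and `b = σ(π-θ)/2`, so that `a + b = σπ/2`, the numerator of `Λ_θ(y) - 1` collapses
to `2 e^{-b} (sinh a - y sinh b)`. At the critical point `y = β x_θ` this is `2 (1 - β) e^{-b} sinh a`,
and on `[θ₀, π - θ₀]` we have `e^{-b} ≥ e^{-σπ/2}`, `sinh a ≥ sinh (σθ₀/2)`, while the denominator
`β x_θ + e^{-σπ/2}` is at most `sinh (σπ/2) / sinh (σθ₀/2) + 1`; this gives an explicit constant.
-/

open Real Set

noncomputable def criticalWeight (σ θ : ℝ) : ℝ :=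
  sinh (σ * θ / 2) / sinh (σ * (π - θ) / 2)

noncomputable def faceCoeff (σ θ y : ℝ) : ℝ :=
  exp (-σ * (π - θ)) * ((y + exp (σ * π / 2)) / (y + exp (-σ * π / 2)))

theorem exp_mul_div_sub_one_eq (a b y : ℝ) (hy : y + exp (-(a + b)) ≠ 0) :
    exp (-(2 * b)) * ((y + exp (a + b)) / (y + exp (-(a + b)))) - 1 =
      2 * exp (-b) * (sinh a - y * sinh b) / (y + exp (-(a + b))) := by
  rw [← mul_div_assoc, div_sub_one hy]
  congr 1
  rw [sinh_eq, sinh_eq, show 2 * b = b + b by ring]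
  simp only [neg_add, exp_add, exp_neg]
  field_simp
  ring

theorem faceCoeff_sub_one (σ θ y : ℝ) (hy : y + exp (-σ * π / 2) ≠ 0) :
    faceCoeff σ θ y - 1 =
      2 * exp (-(σ * (π - θ) / 2)) * (sinh (σ * θ / 2) - y * sinh (σ * (π - θ) / 2)) /
        (y + exp (-σ * π / 2)) := by
  have hsum : σ * π / 2 = σ * θ / 2 + σ * (π - θ) / 2 := by ring
  have hneg : -σ * π / 2 = -(σ * θ / 2 + σ * (π - θ) / 2) := by ring
  have hdouble : -σ * (π - θ) = -(2 * (σ * (π - θ) / 2)) := by ring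
  rw [hneg] at hy ⊢
  rw [faceCoeff, hsum, hneg, hdouble]
  exact exp_mul_div_sub_one_eq _ _ y hy

section

variable {σ β θ θ₀ : ℝ}

theorem faceCoeff_mul_criticalWeight_sub_one (hb : sinh (σ * (π - θ) / 2) ≠ 0)
    (hy : β * criticalWeight σ θ + exp (-σ * π / 2) ≠ 0) :
    faceCoeff σ θ (β * criticalWeight σ θ) - 1 =
      2 * (1 - β) * exp (-(σ * (π - θ) / 2)) * sinh (σ * θ / 2) /
        (β * criticalWeight σ θ + exp (-σ * π / 2)) := by
  rw [faceCoeff_sub_one σ θ _ hy, criticalWeight, mul_assoc β, div_mul_cancel₀ _ hb]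
  ring

theorem criticalWeight_pos (hσ : 0 < σ) (hθ : θ ∈ Ioo 0 π) : 0 < criticalWeight σ θ := by
  have := hθ.1
  have : 0 < π - θ := sub_pos.2 hθ.2
  unfold criticalWeight
  positivity

theorem criticalWeight_le (hσ : 0 < σ) (hθ₀ : 0 < θ₀) (hθ : θ ∈ Icc θ₀ (π - θ₀)) :
    criticalWeight σ θ ≤ sinh (σ * π / 2) / sinh (σ * θ₀ / 2) := by
  obtain ⟨hθ₀θ, hθπ⟩ := hθ
  have : 0 ≤ θ := by linarith
  unfold criticalWeight
  gcongr ?_ / ?_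
  · exact sinh_le_sinh.2 (by gcongr; linarith)
  · exact sinh_le_sinh.2 (by gcongr; linarith)

theorem le_faceCoeff_mul_criticalWeight_sub_one (hσ : 0 < σ) (hβ : β ∈ Ioo 0 1) (hθ₀ : 0 < θ₀)
    (hθ : θ ∈ Icc θ₀ (π - θ₀)) :
    2 * (1 - β) * exp (-(σ * π / 2)) * sinh (σ * θ₀ / 2) /
        (sinh (σ * π / 2) / sinh (σ * θ₀ / 2) + 1)
      ≤ faceCoeff σ θ (β * criticalWeight σ θ) - 1 := by
  obtain ⟨hβ0, hβ1⟩ := hβ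
  obtain ⟨hθ₀θ, hθπ⟩ := hθ
  have hθpos : 0 < θ := by linarith
  have hb : 0 < sinh (σ * (π - θ) / 2) := by
    have : 0 < π - θ := by linarith
    positivity
  have hx := criticalWeight_pos hσ ⟨hθpos, by linarith⟩
  have : 0 < 1 - β := by linarith
  rw [faceCoeff_mul_criticalWeight_sub_one hb.ne' (by positivity)]
  apply div_le_div₀ (by positivity)
  · gcongr 2 * (1 - β) * exp ?_ * ?_
    · nlinarith
    · exact sinh_le_sinh.2 (by gcongr)
  · positivity
  · have hx_le := criticalWeight_le hσ hθ₀ ⟨hθ₀θ, hθπ⟩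
    have : exp (-σ * π / 2) ≤ 1 := exp_le_one_iff.2 (by nlinarith [pi_pos])
    nlinarith

end

theorem uniform_coefficient_lower_bound
    (σ β θ₀ : ℝ) (hσ : 0 < σ) (hβ : β ∈ Set.Ioo (0 : ℝ) 1)
    (hθ₀ : θ₀ ∈ Set.Ioc 0 (π / 2)) :
    ∃ c : ℝ, 0 < c ∧ ∀ θ : ℝ, θ ∈ Set.Icc θ₀ (π - θ₀) →
      Real.exp (-σ * (π - θ)) *
        ((β * (Real.sinh (σ * θ / 2) / Real.sinh (σ * (π - θ) / 2)) + Real.exp (σ * π / 2)) /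
         (β * (Real.sinh (σ * θ / 2) / Real.sinh (σ * (π - θ) / 2)) + Real.exp (-σ * π / 2)))
        - 1 ≥ c := by
  have hθ₀pos := hθ₀.1
  have : 0 < 1 - β := sub_pos.2 hβ.2
  exact ⟨_, by positivity, fun θ hθ => le_faceCoeff_mul_criticalWeight_sub_one hσ hβ hθ₀pos hθ⟩
end

section
/- Let q > 4 and let σ > 0 satisfy cosh(σπ/2) = √q/2. Let p₁, p₂ ∈ (0,1) satisfy p₁·p₂ = q·(1−p₁)·(1−p₂). Then there exists a unique θ ∈ (0,π) such that p₁/((1−p₁)·√q) = sinh(σθ/2)/sinh(σ(π−θ)/2) and p₂/((1−p₂)·√q) = sinh(σ(π−θ)/2)/sinh(σθ/2). -/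
/-! For a fixed `r > 0`, the function `θ ↦ sinh (σθ/2) - r sinh (σ(π-θ)/2)` is continuous and
strictly increasing, negative at `0` and positive at `π`, so it has exactly one zero in `(0, π)`;
there `sinh (σθ/2) / sinh (σ(π-θ)/2) = r`. On the critical surface the two normalised weights
`pᵢ / ((1 - pᵢ) √q)` are mutually inverse, so the second equation follows from the first. -/

open Real Set

section SinhRatio

variable {c L r : ℝ}

lemma strictMono_sinh_sub_mul_sinh (hc : 0 < c) (hr : 0 ≤ r) :
    StrictMono fun θ => sinh (c * θ / 2) - r * sinh (c * (L - θ) / 2) := by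
  intro a b hab
  have hleft : sinh (c * a / 2) < sinh (c * b / 2) := sinh_lt_sinh.mpr (by nlinarith)
  have hright : sinh (c * (L - b) / 2) ≤ sinh (c * (L - a) / 2) := sinh_le_sinh.mpr (by nlinarith)
  have := mul_le_mul_of_nonneg_left hright hr
  dsimp only
  linarith

lemma eq_sinh_div_sinh_iff (hc : 0 < c) {θ : ℝ} (hθ : θ ∈ Ioo 0 L) :
    r = sinh (c * θ / 2) / sinh (c * (L - θ) / 2) ↔
      sinh (c * θ / 2) - r * sinh (c * (L - θ) / 2) = 0 := by
  have hpos : 0 < sinh (c * (L - θ) / 2) :=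
    sinh_pos_iff.mpr (by have := sub_pos.mpr hθ.2; positivity)
  rw [eq_div_iff hpos.ne', sub_eq_zero, eq_comm]

theorem existsUnique_eq_sinh_div_sinh (hc : 0 < c) (hL : 0 < L) (hr : 0 < r) :
    ∃! θ, θ ∈ Ioo 0 L ∧ r = sinh (c * θ / 2) / sinh (c * (L - θ) / 2) := by
  set g : ℝ → ℝ := fun θ => sinh (c * θ / 2) - r * sinh (c * (L - θ) / 2) with hg
  have hmono : StrictMono g := strictMono_sinh_sub_mul_sinh hc hr.le
  have hcont : Continuous g := by fun_prop
  have hsinh : 0 < sinh (c * L / 2) := sinh_pos_iff.mpr (by positivity)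
  have hg0 : g 0 < 0 := by simp [hg, hr, hsinh]
  have hgL : 0 < g L := by simpa [hg] using hsinh
  obtain ⟨θ, hθ, hzero⟩ := intermediate_value_Ioo hL.le hcont.continuousOn ⟨hg0, hgL⟩
  refine ⟨θ, ⟨hθ, (eq_sinh_div_sinh_iff hc hθ).mpr hzero⟩, ?_⟩
  rintro θ' ⟨hθ', heq⟩
  exact hmono.injective (((eq_sinh_div_sinh_iff hc hθ').mp heq).trans hzero.symm)

end SinhRatio

lemma critical_weight_mul_eq_one {q p₁ p₂ : ℝ} (hq : 0 < q) (hp₁ : p₁ < 1) (hp₂ : p₂ < 1)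
    (hcrit : p₁ * p₂ = q * (1 - p₁) * (1 - p₂)) :
    p₁ / ((1 - p₁) * √q) * (p₂ / ((1 - p₂) * √q)) = 1 := by
  have hsq : √q * √q = q := mul_self_sqrt hq.le
  have : 0 < 1 - p₁ := by linarith
  have : 0 < 1 - p₂ := by linarith
  rw [div_mul_div_comm, div_eq_one_iff_eq (by positivity)]
  linear_combination hcrit - (1 - p₁) * (1 - p₂) * hsq

theorem square_lattice_critical_surface_realization_general
    (q σ p₁ p₂ : ℝ) (hq : 4 < q) (hσ : 0 < σ)
    (hp₁ : p₁ ∈ Set.Ioo (0 : ℝ) 1) (hp₂ : p₂ ∈ Set.Ioo (0 : ℝ) 1)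
    (hcrit : p₁ * p₂ = q * (1 - p₁) * (1 - p₂)) :
    ∃! θ : ℝ, θ ∈ Set.Ioo 0 π ∧
      p₁ / ((1 - p₁) * Real.sqrt q)
        = Real.sinh (σ * θ / 2) / Real.sinh (σ * (π - θ) / 2) ∧
      p₂ / ((1 - p₂) * Real.sqrt q)
        = Real.sinh (σ * (π - θ) / 2) / Real.sinh (σ * θ / 2) := by
  have hq0 : 0 < q := by linarith
  have hr₁ : 0 < p₁ / ((1 - p₁) * √q) :=
    div_pos hp₁.1 (mul_pos (sub_pos.mpr hp₁.2) (sqrt_pos.mpr hq0))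
  have hr₂ : p₂ / ((1 - p₂) * √q) = (p₁ / ((1 - p₁) * √q))⁻¹ :=
    eq_inv_of_mul_eq_one_right (critical_weight_mul_eq_one hq0 hp₁.2 hp₂.2 hcrit)
  obtain ⟨θ, ⟨hθ, h₁⟩, huniq⟩ := existsUnique_eq_sinh_div_sinh hσ pi_pos hr₁
  refine ⟨θ, ⟨hθ, h₁, by rw [hr₂, h₁, inv_div]⟩, ?_⟩
  rintro θ' ⟨hθ', h₁', -⟩
  exact huniq θ' ⟨hθ', h₁'⟩

theorem square_lattice_critical_surface_realization
    (q σ p₁ p₂ : ℝ) (hq : 4 < q) (hσ : 0 < σ)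
    (hspin : Real.cosh (σ * π / 2) = Real.sqrt q / 2)
    (hp₁ : p₁ ∈ Set.Ioo (0 : ℝ) 1) (hp₂ : p₂ ∈ Set.Ioo (0 : ℝ) 1)
    (hcrit : p₁ * p₂ = q * (1 - p₁) * (1 - p₂)) :
    ∃! θ : ℝ, θ ∈ Set.Ioo 0 π ∧
      p₁ / ((1 - p₁) * Real.sqrt q)
        = Real.sinh (σ * θ / 2) / Real.sinh (σ * (π - θ) / 2) ∧
      p₂ / ((1 - p₂) * Real.sqrt q)
        = Real.sinh (σ * (π - θ) / 2) / Real.sinh (σ * θ / 2) :=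
  square_lattice_critical_surface_realization_general q σ p₁ p₂ hq hσ hp₁ hp₂ hcrit
end

section
/- Let σ > 0 and set √q := 2·cosh(σπ/2). Let θ₁, θ₂, θ₃ ∈ (0,π) with θ₁ + θ₂ + θ₃ = π, and set xᵢ = sinh(σθᵢ/2)/sinh(σ(π−θᵢ)/2) for i = 1,2,3. Then √q·x₁x₂x₃ + x₁x₂ + x₂x₃ + x₃x₁ = 1. Equivalently, writing 2s_i = σθᵢ: 2·cosh(s₁+s₂+s₃)·sinh s₁·sinh s₂·sinh s₃ + Σ_{i<j} sinh sᵢ·sinh s_j·sinh(sᵢ+s_j) = sinh(s₁+s₂)·sinh(s₂+s₃)·sinh(s₁+s₃). -/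
/-!
With `sᵢ = σθᵢ/2` the constraint `θ₁ + θ₂ + θ₃ = π` gives `σπ/2 = s₁ + s₂ + s₃`, so the weights
become `xᵢ = sinh sᵢ / sinh (sⱼ + sₖ)` and `√q = 2 cosh (s₁ + s₂ + s₃)`. Clearing the (nonzero)
denominators turns the first identity into the second, which is a polynomial identity in the
`exp sᵢ`.
-/

open Real

theorem sinh_add_mul_sinh_add_mul_sinh_add (a b c : ℝ) :
    sinh (a + b) * sinh (b + c) * sinh (a + c) =
      2 * cosh (a + b + c) * (sinh a * sinh b * sinh c)
        + (sinh a * sinh b * sinh (a + b) + sinh a * sinh c * sinh (a + c)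
          + sinh b * sinh c * sinh (b + c)) := by
  simp only [sinh_eq, cosh_eq, exp_add, exp_neg]
  field_simp
  ring

theorem sinh_div_sinh_add_weights_critical_identity {a b c : ℝ}
    (hbc : sinh (b + c) ≠ 0) (hac : sinh (a + c) ≠ 0) (hab : sinh (a + b) ≠ 0) :
    2 * cosh (a + b + c)
        * (sinh a / sinh (b + c) * (sinh b / sinh (a + c)) * (sinh c / sinh (a + b)))
      + sinh a / sinh (b + c) * (sinh b / sinh (a + c))
      + sinh b / sinh (a + c) * (sinh c / sinh (a + b))
      + sinh c / sinh (a + b) * (sinh a / sinh (b + c)) = 1 := by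
  field_simp
  linear_combination -(sinh_add_mul_sinh_add_mul_sinh_add a b c)

theorem triangular_lattice_critical_identity
    (σ θ₁ θ₂ θ₃ : ℝ) (hσ : 0 < σ)
    (h₁ : θ₁ ∈ Set.Ioo 0 π) (h₂ : θ₂ ∈ Set.Ioo 0 π) (h₃ : θ₃ ∈ Set.Ioo 0 π)
    (hsum : θ₁ + θ₂ + θ₃ = π)
    (sqrtq : ℝ) (hq : sqrtq = 2 * Real.cosh (σ * π / 2))
    (x₁ x₂ x₃ : ℝ)
    (hx₁ : x₁ = Real.sinh (σ * θ₁ / 2) / Real.sinh (σ * (π - θ₁) / 2))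
    (hx₂ : x₂ = Real.sinh (σ * θ₂ / 2) / Real.sinh (σ * (π - θ₂) / 2))
    (hx₃ : x₃ = Real.sinh (σ * θ₃ / 2) / Real.sinh (σ * (π - θ₃) / 2))
    (s₁ s₂ s₃ : ℝ) (hs₁ : 2 * s₁ = σ * θ₁) (hs₂ : 2 * s₂ = σ * θ₂)
    (hs₃ : 2 * s₃ = σ * θ₃) :
    sqrtq * (x₁ * x₂ * x₃) + x₁ * x₂ + x₂ * x₃ + x₃ * x₁ = 1
    ∧ 2 * Real.cosh (s₁ + s₂ + s₃) * (Real.sinh s₁ * Real.sinh s₂ * Real.sinh s₃)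
        + (Real.sinh s₁ * Real.sinh s₂ * Real.sinh (s₁ + s₂)
          + Real.sinh s₁ * Real.sinh s₃ * Real.sinh (s₁ + s₃)
          + Real.sinh s₂ * Real.sinh s₃ * Real.sinh (s₂ + s₃))
      = Real.sinh (s₁ + s₂) * Real.sinh (s₂ + s₃) * Real.sinh (s₁ + s₃) := by
  refine ⟨?_, (sinh_add_mul_sinh_add_mul_sinh_add s₁ s₂ s₃).symm⟩
  have hden : ∀ θ ∈ Set.Ioo 0 π, sinh (σ * (π - θ) / 2) ≠ 0 := fun θ hθ =>
    (sinh_pos_iff.2 (div_pos (mul_pos hσ (sub_pos.2 hθ.2)) two_pos)).ne'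
  have e₁ : σ * θ₁ / 2 = s₁ := by linarith
  have e₂ : σ * θ₂ / 2 = s₂ := by linarith
  have e₃ : σ * θ₃ / 2 = s₃ := by linarith
  have eπ : σ * π / 2 = s₁ + s₂ + s₃ := by
    linear_combination (-σ / 2) * hsum - (hs₁ + hs₂ + hs₃) / 2
  have f₁ : σ * (π - θ₁) / 2 = s₂ + s₃ := by
    linear_combination (-σ / 2) * hsum - (hs₂ + hs₃) / 2
  have f₂ : σ * (π - θ₂) / 2 = s₁ + s₃ := by
    linear_combination (-σ / 2) * hsum - (hs₁ + hs₃) / 2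
  have f₃ : σ * (π - θ₃) / 2 = s₁ + s₂ := by
    linear_combination (-σ / 2) * hsum - (hs₁ + hs₂) / 2
  rw [hq, hx₁, hx₂, hx₃, e₁, e₂, e₃, eπ, f₁, f₂, f₃]
  exact sinh_div_sinh_add_weights_critical_identity
    (f₁ ▸ hden θ₁ h₁) (f₂ ▸ hden θ₂ h₂) (f₃ ▸ hden θ₃ h₃)
end

section
/- Let σ > 0 and set √q := 2·cosh(σπ/2). Let φ₁, φ₂, φ₃ ∈ (0,π) with φ₁ + φ₂ + φ₃ = 2π, and set yᵢ = sinh(σφᵢ/2)/sinh(σ(π−φᵢ)/2) for i = 1,2,3. Then y₁y₂y₃ = y₁ + y₂ + y₃ + √q. -/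
/-! With `aᵢ = σφᵢ/2` and `s = σπ/2` the constraint `∑ φᵢ = 2π` reads `a₁ + a₂ + a₃ = 2s`, and
`yᵢ = sinh aᵢ / sinh (s - aᵢ)`. After clearing the (positive) denominators the identity becomes a
relation between hyperbolic sines which, written in `eᵃ¹, eᵃ², eˢ` (with `eᵃ³ = e²ˢ / (eᵃ¹ eᵃ²)`),
is an identity of rational functions. -/

open Real

theorem sinh_mul_sinh_mul_sinh_of_add_eq {a b c s : ℝ} (h : a + b + c = 2 * s) :
    sinh a * sinh b * sinh c =
      sinh a * sinh (s - b) * sinh (s - c) + sinh (s - a) * sinh b * sinh (s - c)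
        + sinh (s - a) * sinh (s - b) * sinh c
        + 2 * cosh s * (sinh (s - a) * sinh (s - b) * sinh (s - c)) := by
  obtain rfl : c = 2 * s - a - b := by linarith
  simp only [sinh_eq, cosh_eq, neg_sub, exp_sub, exp_neg, two_mul, exp_add]
  field_simp
  ring

theorem sinh_div_sinh_sub_mul_mul_eq_add {a b c s : ℝ} (h : a + b + c = 2 * s)
    (ha : sinh (s - a) ≠ 0) (hb : sinh (s - b) ≠ 0) (hc : sinh (s - c) ≠ 0) :
    sinh a / sinh (s - a) * (sinh b / sinh (s - b)) * (sinh c / sinh (s - c)) =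
      sinh a / sinh (s - a) + sinh b / sinh (s - b) + sinh c / sinh (s - c) + 2 * cosh s := by
  field_simp
  linear_combination sinh_mul_sinh_mul_sinh_of_add_eq h

theorem hexagonal_lattice_critical_identity
    (σ φ₁ φ₂ φ₃ : ℝ) (hσ : 0 < σ)
    (h₁ : φ₁ ∈ Set.Ioo 0 π) (h₂ : φ₂ ∈ Set.Ioo 0 π) (h₃ : φ₃ ∈ Set.Ioo 0 π)
    (hsum : φ₁ + φ₂ + φ₃ = 2 * π)
    (sqrtq : ℝ) (hq : sqrtq = 2 * Real.cosh (σ * π / 2))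
    (y₁ y₂ y₃ : ℝ)
    (hy₁ : y₁ = Real.sinh (σ * φ₁ / 2) / Real.sinh (σ * (π - φ₁) / 2))
    (hy₂ : y₂ = Real.sinh (σ * φ₂ / 2) / Real.sinh (σ * (π - φ₂) / 2))
    (hy₃ : y₃ = Real.sinh (σ * φ₃ / 2) / Real.sinh (σ * (π - φ₃) / 2)) :
    y₁ * y₂ * y₃ = y₁ + y₂ + y₃ + sqrtq := by
  have shift (φ : ℝ) : σ * (π - φ) / 2 = σ * π / 2 - σ * φ / 2 := by ring
  have denom_ne_zero {φ : ℝ} (hφ : φ ∈ Set.Ioo 0 π) : sinh (σ * π / 2 - σ * φ / 2) ≠ 0 := by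
    rw [← shift]
    exact (sinh_pos_iff.mpr (by nlinarith [hφ.2])).ne'
  rw [hy₁, hy₂, hy₃, hq, shift, shift, shift]
  exact sinh_div_sinh_sub_mul_mul_eq_add (by linear_combination σ / 2 * hsum)
    (denom_ne_zero h₁) (denom_ne_zero h₂) (denom_ne_zero h₃)
end

section
/- For every β ∈ (0,1) there exist q > 4 and β' ∈ (0,1) such that, with σ > 0 defined by cosh(σπ/2) = √q/2, for every θ ∈ (0,π): (β'/√q)·sinh(σθ/2)/sinh(σ(π−θ)/2) ≥ (β/2)·θ/(π−θ). -/
/-!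
Put `s = σπ/2`, `x = σθ/2`, `y = σ(π - θ)/2`, so that `x + y = s`, `√q = 2 cosh s` and
`θ/(π - θ) = x/y`. Because `sinh` is convex on `[0, ∞)` and vanishes at `0`, its chord slope
`sinh t / t` is at least `1`, increasing, and at most `cosh t`. Hence `sinh x ≥ x`,
`sinh y ≤ y sinh s / s` and `sinh s cosh s = sinh (2s) / 2 ≤ s cosh (2s)`, which together give
`x / y ≤ (cosh (2s) / cosh s) · (sinh x / sinh y)`. Choosing `q = 3 + 1/β` makes
`cosh (2s) = q/2 - 1 = (1 + β)/(2β)`, so `β' = (1 + β)/2 = β cosh (2s)` turns this into the claim.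
-/

open Real Set

namespace Real

lemma convexOn_sinh_Ici : ConvexOn ℝ (Ici 0) sinh := by
  refine MonotoneOn.convexOn_of_deriv (convex_Ici 0) continuous_sinh.continuousOn
    differentiable_sinh.differentiableOn ?_
  rw [interior_Ici, deriv_sinh]
  exact cosh_strictMonoOn.monotoneOn.mono Ioi_subset_Ici_self

lemma sinh_div_le_sinh_div {y s : ℝ} (hy : 0 < y) (hys : y ≤ s) : sinh y / y ≤ sinh s / s := by
  have hslope := convexOn_sinh_Ici.slope_mono (self_mem_Ici (a := (0 : ℝ)))
    ⟨hy.le, hy.ne'⟩ ⟨hy.le.trans hys, (hy.trans_le hys).ne'⟩ hys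
  simpa [slope_def_field] using hslope

lemma sinh_le_mul_cosh {s : ℝ} (hs : 0 ≤ s) : sinh s ≤ s * cosh s := by
  rcases hs.eq_or_lt with rfl | hs
  · simp
  have hslope := convexOn_sinh_Ici.slope_le_of_hasDerivAt self_mem_Ici hs.le hs
    (hasDerivAt_sinh s)
  rw [slope_def_field, sinh_zero, sub_zero, sub_zero, div_le_iff₀ hs] at hslope
  linarith

lemma div_le_cosh_two_mul_div_cosh_mul_sinh_div_sinh {x y : ℝ} (hx : 0 < x) (hy : 0 < y) :
    x / y ≤ cosh (2 * (x + y)) / cosh (x + y) * (sinh x / sinh y) := by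
  set s := x + y
  have hs : 0 < s := add_pos hx hy
  have hsinh_s : 0 < sinh s := sinh_pos_iff.2 hs
  have hsinh_y : 0 < sinh y := sinh_pos_iff.2 hy
  have hsinh_y_le : sinh y ≤ y * (sinh s / s) := by
    rw [← div_le_iff₀' hy]
    exact sinh_div_le_sinh_div hy (le_add_of_nonneg_left hx.le)
  have hsinh_two_mul : sinh s * cosh s ≤ s * cosh (2 * s) := by
    have := sinh_le_mul_cosh (by positivity : 0 ≤ 2 * s)
    rw [sinh_two_mul] at this
    linarith
  calc x / y ≤ x / y * (s * cosh (2 * s) / (sinh s * cosh s)) := by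
        refine le_mul_of_one_le_right (by positivity) ?_
        rwa [one_le_div (by positivity)]
    _ = cosh (2 * s) / cosh s * (x / (y * (sinh s / s))) := by
        field_simp
    _ ≤ cosh (2 * s) / cosh s * (sinh x / sinh y) := by
        gcongr
        exact (self_lt_sinh_iff.2 hx).le

end Real

theorem stochastic_domination_reduction
    (β : ℝ) (hβ : β ∈ Set.Ioo (0 : ℝ) 1) :
    ∃ q : ℝ, 4 < q ∧ ∃ β' : ℝ, β' ∈ Set.Ioo (0 : ℝ) 1 ∧
      ∀ σ : ℝ, 0 < σ → Real.cosh (σ * π / 2) = Real.sqrt q / 2 →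
        ∀ θ : ℝ, θ ∈ Set.Ioo 0 π →
          (β' / Real.sqrt q) *
              (Real.sinh (σ * θ / 2) / Real.sinh (σ * (π - θ) / 2))
            ≥ (β / 2) * (θ / (π - θ)) := by
  obtain ⟨hβ0, hβ1⟩ := hβ
  refine ⟨3 + 1 / β, ?_, (1 + β) / 2, ⟨by linarith, by linarith⟩, ?_⟩
  · have : 1 < 1 / β := by rwa [one_lt_div hβ0]
    linarith
  rintro σ hσ hcosh θ ⟨hθ0, hθπ⟩
  set x := σ * θ / 2
  set y := σ * (π - θ) / 2
  have hx : 0 < x := by positivity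
  have hy : 0 < y := by have := sub_pos.2 hθπ; positivity
  have hsqrt : √(3 + 1 / β) = 2 * cosh (x + y) := by
    rw [show x + y = σ * π / 2 by ring]; linarith
  have hcosh_two_mul : cosh (2 * (x + y)) = (1 + β) / (2 * β) := by
    have hsq := sq_sqrt (by positivity : (0 : ℝ) ≤ 3 + 1 / β)
    rw [hsqrt] at hsq
    rw [cosh_two_mul, eq_div_iff (by positivity)]
    linear_combination β * hsq - 2 * β * cosh_sq (x + y) + mul_one_div_cancel hβ0.ne'
  have hratio : θ / (π - θ) = x / y := by
    simp only [x, y]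
    field_simp
  have hβ' : (1 + β) / 2 / √(3 + 1 / β) = β / 2 * (cosh (2 * (x + y)) / cosh (x + y)) := by
    rw [hsqrt, hcosh_two_mul]
    field_simp
  rw [ge_iff_le, hratio, hβ', mul_assoc]
  exact mul_le_mul_of_nonneg_left (div_le_cosh_two_mul_div_cosh_mul_sinh_div_sinh hx hy)
    (by positivity)
end
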